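/- arXiv:2010.14770 — 2 statements merged into one kernel-verified Lean document; each statement's English description precedes it below -/
import Mathlib

section
/- Let (K,<) be an ordered field and let v be a henselian valuation on K. Then the valuation ring O_v is convex in (K,<). -/
/-!
If `0 ≤ a ≤ b` with `b ∈ O` but `a ∉ O`, then `t = b / a` lies in the maximal ideal and `t ≥ 1`.
Since `0` is a simple root of `X ^ 2 + X + t` modulo the maximal ideal, Hensel's lemma gives
a root `x ∈ O`; but in an ordered field `x ^ 2 + x + t = 0` forces `4 t = 1 - (2 x + 1) ^ 2 ≤ 1`.
-/

open Polynomial IsLocalRing in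
theorem HenselianLocalRing.exists_sq_add_self_add_eq_zero {R : Type*} [CommRing R]
    [HenselianLocalRing R] {t : R} (ht : t ∈ maximalIdeal R) : ∃ x : R, x ^ 2 + x + t = 0 := by
  have hmonic : (X ^ 2 + X + C t : R[X]).Monic := by monicity!
  obtain ⟨x, hx, -⟩ := HenselianLocalRing.is_henselian _ hmonic 0 (by simpa using ht)
    (by simp)
  exact ⟨x, by simpa using hx⟩

theorem four_mul_le_one_of_sq_add_self_add_eq_zero {R : Type*} [CommRing R] [LinearOrder R]
    [IsOrderedRing R] {x t : R} (h : x ^ 2 + x + t = 0) : 4 * t ≤ 1 := by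
  rw [show 4 * t = 1 - (2 * x + 1) ^ 2 by linear_combination 4 * h]
  exact sub_le_self 1 (sq_nonneg _)

namespace ValuationSubring
variable {K : Type*} [Field K] {A : ValuationSubring K}

theorem inv_mem_nonunits {x : K} (hx : x ∉ A) : x⁻¹ ∈ A.nonunits :=
  A.inv_mem_nonunits_iff.mpr (Or.inr hx)

theorem mul_mem_nonunits {x y : K} (hx : x ∈ A) (hy : y ∈ A.nonunits) : x * y ∈ A.nonunits := by
  rw [A.mem_nonunits_iff, map_mul]
  exact (mul_le_of_le_one_left' ((A.valuation_le_one_iff x).mpr hx)).trans_lt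
    (A.mem_nonunits_iff.mp hy)

theorem four_mul_le_one_of_mem_nonunits [LinearOrder K] [IsStrictOrderedRing K]
    [HenselianLocalRing A] {t : K} (ht : t ∈ A.nonunits) : 4 * t ≤ 1 := by
  obtain ⟨_, htm⟩ := mem_nonunits_iff_exists_mem_maximalIdeal.mp ht
  obtain ⟨x, hx⟩ := HenselianLocalRing.exists_sq_add_self_add_eq_zero htm
  exact four_mul_le_one_of_sq_add_self_add_eq_zero (x := (x : K))
    (by simpa using congrArg ((↑) : A → K) hx)

end ValuationSubring

/-- In an ordered field, the valuation ring of a henselian valuation is convex. -/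
theorem stmt_1 {K : Type*} [Field K] [LinearOrder K] [IsStrictOrderedRing K] (O : ValuationSubring K)
    [HenselianLocalRing O] :
    ∀ a b : K, 0 ≤ a → a ≤ b → b ∈ O → a ∈ O := by
  intro a b ha hab hb
  by_contra haO
  have ha_pos : 0 < a := ha.lt_of_ne (by rintro rfl; exact haO O.zero_mem)
  have h_le := O.four_mul_le_one_of_mem_nonunits (O.mul_mem_nonunits hb (O.inv_mem_nonunits haO))
  have h_one_le : 1 ≤ b * a⁻¹ := by rwa [← div_eq_mul_inv, one_le_div ha_pos]
  linarith
end

section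
/- If k is an archimedean ordered field and G an ordered abelian group, then on the Hahn field k((G)) the valuation v_min (minimum of support) coincides with the natural valuation: two nonzero Hahn series s, t are archimedean equivalent if and only if min supp s = min supp t. -/
/-!
A translation-invariant linear order on `k((G))` is determined by its positive cone, so an order
in which the positive series are those with positive leading coefficient is the lexicographic one.
In the lexicographic order the archimedean class of a nonzero series is determined by its order
together with the archimedean class of its leading coefficient, and when `k` is archimedean all
nonzero coefficients lie in a single class.
-/

namespace ArchimedeanClass

variable {M : Type*} [AddCommGroup M] [LinearOrder M] [IsOrderedAddMonoid M]

theorem mk_eq_mk_iff_exists_nsmul_lt {a b : M} (ha : a ≠ 0) (hb : b ≠ 0) :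
    mk a = mk b ↔ ∃ n : ℕ, |a| < n • |b| ∧ |b| < n • |a| := by
  rw [le_antisymm_iff, mk_le_mk_iff_lt ha, mk_le_mk_iff_lt hb]
  constructor
  · rintro ⟨⟨m, hm⟩, n, hn⟩
    exact ⟨max m n, hn.trans_le (nsmul_le_nsmul_left (abs_nonneg b) (le_max_right m n)),
      hm.trans_le (nsmul_le_nsmul_left (abs_nonneg a) (le_max_left m n))⟩
  · rintro ⟨n, hab, hba⟩
    exact ⟨⟨n, hba⟩, n, hab⟩

end ArchimedeanClass

namespace HahnSeries

variable {Γ R : Type*} [LinearOrder Γ] [LinearOrder R] [AddCommGroup R] [IsOrderedAddMonoid R]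

theorem archimedeanClassMk_eq_archimedeanClassMk_iff_orderTop_eq [Archimedean R]
    {x y : Lex R⟦Γ⟧} (hx : x ≠ 0) (hy : y ≠ 0) :
    ArchimedeanClass.mk x = .mk y ↔ (ofLex x).orderTop = (ofLex y).orderTop := by
  rw [archimedeanClassMk_eq_archimedeanClassMk_iff, and_iff_left_iff_imp]
  exact fun _ ↦ ArchimedeanClass.mk_eq_mk_of_archimedean (leadingCoeff_ne_zero.mpr hx)
    (leadingCoeff_ne_zero.mpr hy)

theorem linearOrder_eq_lex (L : LinearOrder R⟦Γ⟧)
    (hpos : ∀ s : R⟦Γ⟧, s ≠ 0 → (L.lt 0 s ↔ 0 < s.leadingCoeff))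
    (hadd : ∀ a b c : R⟦Γ⟧, L.lt a b → L.lt (a + c) (b + c)) :
    L = (inferInstance : LinearOrder (Lex R⟦Γ⟧)) := by
  have lt_iff_sub_pos (a b : R⟦Γ⟧) : L.lt a b ↔ L.lt 0 (b - a) :=
    ⟨fun h ↦ by simpa [sub_eq_add_neg] using hadd a b (-a) h,
      fun h ↦ by simpa using hadd 0 (b - a) a h⟩
  have pos_iff (s : R⟦Γ⟧) : L.lt 0 s ↔ 0 < toLex s := by
    rw [← leadingCoeff_pos_iff]
    rcases eq_or_ne s 0 with rfl | hs
    · simp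
    · exact hpos s hs
  refine LinearOrder.ext_lt fun a b ↦ ?_
  rw [lt_iff_sub_pos, pos_iff]
  exact sub_pos

end HahnSeries

theorem stmt_8_general {k G : Type*} [Field k] [LinearOrder k] [IsStrictOrderedRing k] [Archimedean k]
    [AddCommGroup G] [LinearOrder G]
    (L : LinearOrder (HahnSeries G k))
    (hpos : ∀ s : HahnSeries G k, s ≠ 0 → (L.lt 0 s ↔ 0 < s.coeff s.order))
    (hadd : ∀ a b c : HahnSeries G k, L.lt a b → L.lt (a + c) (b + c)) :
    ∀ s t : HahnSeries G k, s ≠ 0 → t ≠ 0 →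
      ((∃ n : ℕ, L.lt (L.max s (-s)) (n • L.max t (-t)) ∧
          L.lt (L.max t (-t)) (n • L.max s (-s))) ↔ s.order = t.order) := by
  simp_rw [← HahnSeries.leadingCoeff_eq] at hpos
  obtain rfl := HahnSeries.linearOrder_eq_lex L hpos hadd
  intro s t hs ht
  change (∃ n : ℕ, |(toLex s : Lex (HahnSeries G k))| < n • |toLex t| ∧
    |toLex t| < n • |toLex s|) ↔ _
  have hs' : toLex s ≠ 0 := hs
  have ht' : toLex t ≠ 0 := ht
  rw [← ArchimedeanClass.mk_eq_mk_iff_exists_nsmul_lt hs' ht',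
    HahnSeries.archimedeanClassMk_eq_archimedeanClassMk_iff_orderTop_eq hs' ht', ofLex_toLex,
    ofLex_toLex, ← HahnSeries.order_eq_orderTop_of_ne_zero hs,
    ← HahnSeries.order_eq_orderTop_of_ne_zero ht, WithTop.coe_inj]

/-- Over an archimedean ordered field `k`, on the ordered Hahn field `k((G))`
(ordered by sign of the leading coefficient), two nonzero Hahn series are archimedean
equivalent if and only if the minima of their supports coincide; i.e. `v_min` coincides
with the natural valuation. -/
theorem stmt_8 {k G : Type*} [Field k] [LinearOrder k] [IsStrictOrderedRing k] [Archimedean k]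
    [AddCommGroup G] [LinearOrder G] [IsOrderedAddMonoid G]
    (L : LinearOrder (HahnSeries G k))
    (hpos : ∀ s : HahnSeries G k, s ≠ 0 → (L.lt 0 s ↔ 0 < s.coeff s.order))
    (hadd : ∀ a b c : HahnSeries G k, L.lt a b → L.lt (a + c) (b + c)) :
    ∀ s t : HahnSeries G k, s ≠ 0 → t ≠ 0 →
      ((∃ n : ℕ, L.lt (L.max s (-s)) (n • L.max t (-t)) ∧
          L.lt (L.max t (-t)) (n • L.max s (-s))) ↔ s.order = t.order) :=
  stmt_8_general L hpos hadd
end
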